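/- Let T be the (q+1)-homogeneous rooted tree with q ≥ 2, let 1 ≤ p < ∞, and let φ be a bounded self-map of T (i.e. {|φ(v)| : v ∈ T} is bounded) with sup_{v∈T} |φ(v)| = M. Then C_φ is bounded on T_p with ‖C_φ‖^p ≤ c_M. Moreover, ‖C_φ‖^p = c_M if and only if sup_{n ≥ 0} N_{M,n}/c_n = 1. -/

import Mathlib

open scoped BigOperators Classical

noncomputable section

/-- `treeC q n` is the number `c_n` of vertices at level `n` of the
`(q+1)`-homogeneous rooted tree: `c_0 = 1` and `c_n = (q+1) q^(n-1)` for `n ≥ 1`. -/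
def treeC (q n : ℕ) : ℕ := if n = 0 then 1 else (q + 1) * q ^ (n - 1)

/-- An abstract `(q+1)`-homogeneous rooted tree, described by its vertex set, root,
level function `|·|` (graph distance to the root), and the level counts:
level `n` contains exactly `c_n = treeC q n` vertices. -/
structure HomTree (q : ℕ) where
  V : Type
  root : V
  level : V → ℕ
  level_eq_zero_iff : ∀ v : V, level v = 0 ↔ v = root
  finiteLevel : ∀ n : ℕ, {v : V | level v = n}.Finite
  card_level : ∀ n : ℕ, (finiteLevel n).toFinset.card = treeC q n

namespace HomTree

variable {q : ℕ} (T : HomTree q)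

/-- The set `D_n` of vertices of level `n`, as a finset. -/
def levelFinset (n : ℕ) : Finset T.V := (T.finiteLevel n).toFinset

/-- `M_p(n, f)` for `0 < p < ∞`:
`M_p(n,f) = ((1/c_n) ∑_{|v|=n} |f v|^p)^(1/p)` (which equals `|f o|` for `n = 0`). -/
def Mp (p : ℝ) (n : ℕ) (f : T.V → ℂ) : ℝ :=
  ((1 / (treeC q n : ℝ)) * ∑ v ∈ T.levelFinset n, ‖f v‖ ^ p) ^ (1 / p)

/-- `M_∞(n, f) = max_{|v| = n} |f v|`. -/
def Minf (n : ℕ) (f : T.V → ℂ) : ℝ :=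
  sSup ((fun v => ‖f v‖) '' {v : T.V | T.level v = n})

/-- `f ∈ T_p`, i.e. `‖f‖_p = sup_n M_p(n,f) < ∞`. -/
def memTp (p : ℝ) (f : T.V → ℂ) : Prop := BddAbove (Set.range fun n => T.Mp p n f)

/-- `‖f‖_p = sup_n M_p(n, f)`. -/
def normTp (p : ℝ) (f : T.V → ℂ) : ℝ := ⨆ n, T.Mp p n f

/-- `f ∈ T_∞`. -/
def memTinf (f : T.V → ℂ) : Prop := BddAbove (Set.range fun n => T.Minf n f)

/-- `‖f‖_∞ = sup_n M_∞(n, f)`. -/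
def normTinf (f : T.V → ℂ) : ℝ := ⨆ n, T.Minf n f

/-- `f ∈ T_{p,0}`: `f ∈ T_p` and `M_p(n,f) → 0` as `n → ∞`. -/
def memTp0 (p : ℝ) (f : T.V → ℂ) : Prop :=
  T.memTp p f ∧ Filter.Tendsto (fun n => T.Mp p n f) Filter.atTop (nhds 0)

/-- `f ∈ T_{∞,0}`. -/
def memTinf0 (f : T.V → ℂ) : Prop :=
  T.memTinf f ∧ Filter.Tendsto (fun n => T.Minf n f) Filter.atTop (nhds 0)

/-- `N_φ(n, w)`: the number of preimages of `w` under `φ` at level `n`. -/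
def Nphi (phi : T.V → T.V) (n : ℕ) (w : T.V) : ℕ :=
  ((T.levelFinset n).filter fun v => phi v = w).card

/-- `N_{m,n} = max_{|w| = m} N_φ(n, w)`. -/
def Nmax (phi : T.V → T.V) (m n : ℕ) : ℕ :=
  (T.levelFinset m).sup fun w => T.Nphi phi n w

/-- `C_φ` is a bounded operator on `T_p`: it maps `T_p` into `T_p` and
`‖f ∘ φ‖_p ≤ C ‖f‖_p` for some constant `C`. -/
def BoundedCompTp (p : ℝ) (phi : T.V → T.V) : Prop :=
  (∀ f : T.V → ℂ, T.memTp p f → T.memTp p (f ∘ phi)) ∧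
  ∃ C : ℝ, ∀ f : T.V → ℂ, T.memTp p f → T.normTp p (f ∘ phi) ≤ C * T.normTp p f

/-- The operator norm of `C_φ` on `T_p`: `sup {‖f ∘ φ‖_p : f ∈ T_p, ‖f‖_p = 1}`. -/
def opNormTp (p : ℝ) (phi : T.V → T.V) : ℝ :=
  sSup {x : ℝ | ∃ f : T.V → ℂ, T.memTp p f ∧ T.normTp p f = 1 ∧ x = T.normTp p (f ∘ phi)}

/-- `C_φ` is a bounded operator on `T_{p,0}`. -/
def BoundedCompTp0 (p : ℝ) (phi : T.V → T.V) : Prop :=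
  (∀ f : T.V → ℂ, T.memTp0 p f → T.memTp0 p (f ∘ phi)) ∧
  ∃ C : ℝ, ∀ f : T.V → ℂ, T.memTp0 p f → T.normTp p (f ∘ phi) ≤ C * T.normTp p f

/-- The operator norm of `C_φ` on `T_{p,0}`. -/
def opNormTp0 (p : ℝ) (phi : T.V → T.V) : ℝ :=
  sSup {x : ℝ | ∃ f : T.V → ℂ, T.memTp0 p f ∧ T.normTp p f = 1 ∧ x = T.normTp p (f ∘ phi)}

/-- `C_φ` is a bounded operator on `T_{∞,0}`. -/
def BoundedCompTinf0 (phi : T.V → T.V) : Prop :=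
  (∀ f : T.V → ℂ, T.memTinf0 f → T.memTinf0 (f ∘ phi)) ∧
  ∃ C : ℝ, ∀ f : T.V → ℂ, T.memTinf0 f → T.normTinf (f ∘ phi) ≤ C * T.normTinf f

end HomTree

/-!
A vertex `w` contributes `|f w|^p / c_{|w|}` to `M_p(|w|, f)^p`, so `|f w|^p ≤ c_{|w|}` on the
unit ball of `T_p`. Split level `n` into the vertices that `φ` sends to level `M` and the rest:
the first part is controlled by the mass of `f` at level `M` times at most `N_{M,n}`
preimages, the second by `c_{M-1}` per vertex. With `s = sup_n N_{M,n}/c_n` this gives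
`‖C_φ‖^p ≤ c_{M-1} + s (c_M - c_{M-1})`, while normalised indicators of vertices at level `M`
with the most preimages give `‖C_φ‖^p ≥ s c_M`. For `q ≥ 2` and `M ≥ 1` we have
`c_{M-1} < c_M`, so the two bounds equal `c_M` exactly when `s = 1`; for `M = 0` everything
lands on the root, so `s = 1` and `‖C_φ‖^p = 1 = c_0`.
-/

lemma treeC_pos {q : ℕ} (hq : 0 < q) (n : ℕ) : 0 < treeC q n := by
  unfold treeC
  split <;> positivity

lemma treeC_le_succ {q : ℕ} (hq : 0 < q) (n : ℕ) : treeC q n ≤ treeC q (n + 1) := by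
  rcases n with _ | n
  · simp [treeC]
  · simp only [treeC, Nat.add_one_ne_zero, if_false, Nat.add_sub_cancel]
    exact Nat.mul_le_mul_left _ (Nat.pow_le_pow_right hq n.le_succ)

lemma treeC_lt_succ {q : ℕ} (hq : 2 ≤ q) (n : ℕ) : treeC q n < treeC q (n + 1) := by
  rcases n with _ | n
  · simp [treeC]
    omega
  · simp only [treeC, Nat.add_one_ne_zero, if_false, Nat.add_sub_cancel]
    exact Nat.mul_lt_mul_of_pos_left (Nat.pow_lt_pow_right hq n.lt_succ_self) (by omega)

lemma treeC_mono {q : ℕ} (hq : 0 < q) : Monotone (treeC q) :=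
  monotone_nat_of_le_succ (treeC_le_succ hq)

lemma treeC_strictMono {q : ℕ} (hq : 2 ≤ q) : StrictMono (treeC q) :=
  strictMono_nat_of_lt_succ (treeC_lt_succ hq)

lemma min_mul_add_mul_le {a b c N x y : ℝ} (hab : a + b = c) (hx : 0 ≤ x) (hxy : x ≤ y) :
    min a N * y + b * x ≤ c * x + N * (y - x) := by
  nlinarith [mul_le_mul_of_nonneg_right (min_le_left a N) hx,
    mul_le_mul_of_nonneg_right (min_le_right a N) (sub_nonneg.2 hxy)]

namespace HomTree

variable {q : ℕ} (T : HomTree q) {p : ℝ}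

lemma mem_levelFinset {n : ℕ} {v : T.V} : v ∈ T.levelFinset n ↔ T.level v = n :=
  Set.Finite.mem_toFinset _

lemma card_levelFinset (n : ℕ) : (T.levelFinset n).card = treeC q n :=
  T.card_level n

lemma levelFinset_zero : T.levelFinset 0 = {T.root} :=
  Finset.ext fun v => by simp [mem_levelFinset, T.level_eq_zero_iff]

lemma Mp_eq (n : ℕ) (f : T.V → ℂ) :
    T.Mp p n f = ((∑ v ∈ T.levelFinset n, ‖f v‖ ^ p) / treeC q n) ^ p⁻¹ := by
  rw [Mp, one_div_mul_eq_div, one_div]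

lemma Mp_nonneg (n : ℕ) (f : T.V → ℂ) : 0 ≤ T.Mp p n f := by
  rw [Mp_eq]
  exact Real.rpow_nonneg (div_nonneg (Finset.sum_nonneg fun v _ => by positivity)
    (Nat.cast_nonneg _)) _

lemma Mp_rpow (hp : p ≠ 0) (n : ℕ) (f : T.V → ℂ) :
    T.Mp p n f ^ p = (∑ v ∈ T.levelFinset n, ‖f v‖ ^ p) / treeC q n := by
  rw [Mp_eq, Real.rpow_inv_rpow _ hp]
  exact div_nonneg (Finset.sum_nonneg fun v _ => by positivity) (Nat.cast_nonneg _)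

lemma normTp_nonneg (f : T.V → ℂ) : 0 ≤ T.normTp p f :=
  Real.iSup_nonneg fun n => T.Mp_nonneg n f

lemma memTp_and_normTp_le_of_sum_le (hq : 0 < q) (hp : 0 < p) {g : T.V → ℂ} {C : ℝ}
    (hC : 0 ≤ C) (h : ∀ n, ∑ v ∈ T.levelFinset n, ‖g v‖ ^ p ≤ treeC q n * C ^ p) :
    T.memTp p g ∧ T.normTp p g ≤ C := by
  have hMp : ∀ n, T.Mp p n g ≤ C := fun n => by
    rw [← Real.rpow_le_rpow_iff (T.Mp_nonneg n g) hC hp, T.Mp_rpow hp.ne',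
      div_le_iff₀' (by exact_mod_cast treeC_pos hq n)]
    exact h n
  exact ⟨⟨C, Set.forall_mem_range.2 hMp⟩, ciSup_le hMp⟩

lemma sum_le_treeC_mul_normTp_rpow (hq : 0 < q) (hp : 0 < p) {f : T.V → ℂ}
    (hf : T.memTp p f) (n : ℕ) :
    ∑ v ∈ T.levelFinset n, ‖f v‖ ^ p ≤ treeC q n * T.normTp p f ^ p := by
  rw [← div_le_iff₀' (by exact_mod_cast treeC_pos hq n), ← T.Mp_rpow hp.ne']
  exact Real.rpow_le_rpow (T.Mp_nonneg n f) (le_ciSup hf n) hp.le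

lemma norm_rpow_le (hq : 0 < q) (hp : 0 < p) {f : T.V → ℂ} (hf : T.memTp p f) {w : T.V}
    {m : ℕ} (hw : T.level w ≤ m) : ‖f w‖ ^ p ≤ treeC q m * T.normTp p f ^ p :=
  calc ‖f w‖ ^ p ≤ ∑ v ∈ T.levelFinset (T.level w), ‖f v‖ ^ p :=
        Finset.single_le_sum (f := fun v => ‖f v‖ ^ p) (fun v _ => by positivity)
          (T.mem_levelFinset.2 rfl)
    _ ≤ treeC q (T.level w) * T.normTp p f ^ p := T.sum_le_treeC_mul_normTp_rpow hq hp hf _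
    _ ≤ treeC q m * T.normTp p f ^ p := by
        gcongr
        · exact Real.rpow_nonneg (T.normTp_nonneg f) _
        · exact treeC_mono hq hw

lemma Nphi_le_treeC (phi : T.V → T.V) (n : ℕ) (w : T.V) : T.Nphi phi n w ≤ treeC q n :=
  (Finset.card_filter_le _ _).trans_eq (T.card_levelFinset n)

lemma Nmax_le_treeC (phi : T.V → T.V) (m n : ℕ) : T.Nmax phi m n ≤ treeC q n :=
  Finset.sup_le fun w _ => T.Nphi_le_treeC phi n w

lemma Nmax_zero {phi : T.V → T.V} (h : ∀ v, T.level (phi v) = 0) (n : ℕ) :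
    T.Nmax phi 0 n = treeC q n := by
  have hroot : ∀ v, phi v = T.root := fun v => (T.level_eq_zero_iff _).1 (h v)
  rw [Nmax, levelFinset_zero, Finset.sup_singleton, Nphi,
    Finset.filter_true_of_mem fun v _ => hroot v, card_levelFinset]

lemma sum_comp_le_Nmax_mul (phi : T.V → T.V) {m n : ℕ} {A : Finset T.V}
    (hA : A ⊆ T.levelFinset n) (hmaps : ∀ v ∈ A, T.level (phi v) = m) {g : T.V → ℝ}
    (hg : ∀ w, 0 ≤ g w) :
    ∑ v ∈ A, g (phi v) ≤ T.Nmax phi m n * ∑ w ∈ T.levelFinset m, g w := by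
  rw [← Finset.sum_fiberwise_of_maps_to (g := phi)
    fun v hv => T.mem_levelFinset.2 (hmaps v hv), Finset.mul_sum]
  refine Finset.sum_le_sum fun w hw => ?_
  rw [Finset.sum_congr rfl fun v hv => by rw [(Finset.mem_filter.1 hv).2], Finset.sum_const,
    nsmul_eq_mul]
  have hcard : (A.filter fun v => phi v = w).card ≤ T.Nmax phi m n :=
    (Finset.card_le_card (Finset.filter_subset_filter _ hA)).trans
      (Finset.le_sup (f := fun w => T.Nphi phi n w) hw)
  exact mul_le_mul_of_nonneg_right (by exact_mod_cast hcard) (hg w)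

lemma sum_norm_comp_rpow_le (hq : 0 < q) (hp : 0 < p) {phi : T.V → T.V} {M : ℕ}
    (hub : ∀ v, T.level (phi v) ≤ M) {f : T.V → ℂ} (hf : T.memTp p f) (n : ℕ) :
    ∑ v ∈ T.levelFinset n, ‖f (phi v)‖ ^ p ≤
      (treeC q n * treeC q (M - 1) + T.Nmax phi M n * (treeC q M - treeC q (M - 1)))
        * T.normTp p f ^ p := by
  set X := T.normTp p f ^ p
  set A := (T.levelFinset n).filter fun v => T.level (phi v) = M
  set B := (T.levelFinset n).filter fun v => ¬T.level (phi v) = M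
  have hX : 0 ≤ X := Real.rpow_nonneg (T.normTp_nonneg f) _
  have hA : ∑ v ∈ A, ‖f (phi v)‖ ^ p ≤
      min (A.card : ℝ) (T.Nmax phi M n) * (treeC q M * X) := by
    rw [min_mul_of_nonneg _ _ (by positivity)]
    refine le_min ?_ ?_
    · simpa using Finset.sum_le_card_nsmul A _ _ fun v _ => T.norm_rpow_le hq hp hf (hub v)
    · calc ∑ v ∈ A, ‖f (phi v)‖ ^ p
          ≤ T.Nmax phi M n * ∑ w ∈ T.levelFinset M, ‖f w‖ ^ p :=
            T.sum_comp_le_Nmax_mul phi (g := fun w => ‖f w‖ ^ p) (Finset.filter_subset _ _)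
              (fun v hv => (Finset.mem_filter.1 hv).2) fun w => by positivity
        _ ≤ T.Nmax phi M n * (treeC q M * X) := by
            gcongr
            exact T.sum_le_treeC_mul_normTp_rpow hq hp hf M
  -- for `M = 0` the set `B` is empty, so the truncation `M - 1 = 0` does no harm
  have hB : ∑ v ∈ B, ‖f (phi v)‖ ^ p ≤ B.card * (treeC q (M - 1) * X) := by
    refine (Finset.sum_le_card_nsmul B _ _ fun v hv => T.norm_rpow_le hq hp hf ?_).trans_eq
      (nsmul_eq_mul _ _)
    have := (Finset.mem_filter.1 hv).2
    have := hub v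
    omega
  have hcard : (A.card : ℝ) + B.card = treeC q n := by
    have := Finset.card_filter_add_card_filter_not (s := T.levelFinset n)
      fun v => T.level (phi v) = M
    rw [T.card_levelFinset] at this
    exact_mod_cast this
  have hmono : (treeC q (M - 1) : ℝ) * X ≤ treeC q M * X := by
    gcongr
    exact treeC_mono hq (Nat.sub_le M 1)
  rw [← Finset.sum_filter_add_sum_filter_not _ fun v => T.level (phi v) = M]
  calc _ ≤ min (A.card : ℝ) (T.Nmax phi M n) * (treeC q M * X)
          + B.card * (treeC q (M - 1) * X) := add_le_add hA hB
    _ ≤ treeC q n * (treeC q (M - 1) * X)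
          + T.Nmax phi M n * (treeC q M * X - treeC q (M - 1) * X) :=
        min_mul_add_mul_le hcard (by positivity) hmono
    _ = _ := by ring

lemma treeC_pred_add_mul_sub_nonneg (hq : 0 < q) {phi : T.V → T.V} {M : ℕ} {s : ℝ}
    (hs : ∀ n, (T.Nmax phi M n : ℝ) ≤ s * treeC q n) :
    (0 : ℝ) ≤ treeC q (M - 1) + s * (treeC q M - treeC q (M - 1)) := by
  have hd : (0 : ℝ) ≤ treeC q M - treeC q (M - 1) :=
    sub_nonneg.2 (by exact_mod_cast treeC_mono hq (Nat.sub_le M 1))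
  have hs0 : 0 ≤ s := by simpa [treeC] using (Nat.cast_nonneg _).trans (hs 0)
  positivity

lemma normTp_comp_le (hq : 0 < q) (hp : 0 < p) {phi : T.V → T.V} {M : ℕ}
    (hub : ∀ v, T.level (phi v) ≤ M) {s : ℝ} (hs : ∀ n, (T.Nmax phi M n : ℝ) ≤ s * treeC q n)
    {f : T.V → ℂ} (hf : T.memTp p f) :
    T.memTp p (f ∘ phi) ∧ T.normTp p (f ∘ phi) ≤
      (treeC q (M - 1) + s * (treeC q M - treeC q (M - 1))) ^ p⁻¹ * T.normTp p f := by
  have hd : (0 : ℝ) ≤ treeC q M - treeC q (M - 1) :=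
    sub_nonneg.2 (by exact_mod_cast treeC_mono hq (Nat.sub_le M 1))
  have hK := T.treeC_pred_add_mul_sub_nonneg hq hs
  have hN := T.normTp_nonneg (p := p) f
  refine T.memTp_and_normTp_le_of_sum_le hq hp (by positivity) fun n => ?_
  rw [Real.mul_rpow (by positivity) hN, Real.rpow_inv_rpow hK hp.ne']
  refine (T.sum_norm_comp_rpow_le hq hp hub hf n).trans ?_
  have hX := Real.rpow_nonneg hN p
  nlinarith [mul_le_mul_of_nonneg_right (hs n) (mul_nonneg hd hX)]

lemma boundedCompTp (hq : 0 < q) (hp : 0 < p) {phi : T.V → T.V} {M : ℕ}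
    (hub : ∀ v, T.level (phi v) ≤ M) : T.BoundedCompTp p phi := by
  have h := fun f (hf : T.memTp p f) =>
    T.normTp_comp_le hq hp hub (s := 1) (fun n => by simpa using T.Nmax_le_treeC phi M n) hf
  exact ⟨fun f hf => (h f hf).1, _, fun f hf => (h f hf).2⟩

def normedIndicator (p : ℝ) (w : T.V) : T.V → ℂ :=
  Pi.single w (((treeC q (T.level w) : ℝ) ^ p⁻¹ : ℝ) : ℂ)

lemma norm_normedIndicator_rpow (hp : p ≠ 0) (w u : T.V) :
    ‖T.normedIndicator p w u‖ ^ p = if u = w then (treeC q (T.level w) : ℝ) else 0 := by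
  by_cases hu : u = w
  · subst hu
    rw [normedIndicator, Pi.single_eq_same, Complex.norm_real, Real.norm_eq_abs,
      abs_of_nonneg (by positivity), Real.rpow_inv_rpow (by positivity) hp, if_pos rfl]
  · rw [normedIndicator, Pi.single_eq_of_ne hu, norm_zero, Real.zero_rpow hp, if_neg hu]

lemma sum_norm_normedIndicator_rpow (hp : p ≠ 0) (n : ℕ) (w : T.V) :
    ∑ v ∈ T.levelFinset n, ‖T.normedIndicator p w v‖ ^ p =
      if T.level w = n then (treeC q n : ℝ) else 0 := by
  simp only [T.norm_normedIndicator_rpow hp, Finset.sum_ite_eq', mem_levelFinset]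
  split_ifs with h <;> simp [h]

lemma sum_norm_normedIndicator_comp_rpow (hp : p ≠ 0) (g : T.V → T.V) (n : ℕ) (w : T.V) :
    ∑ v ∈ T.levelFinset n, ‖T.normedIndicator p w (g v)‖ ^ p =
      T.Nphi g n w * treeC q (T.level w) := by
  simp only [T.norm_normedIndicator_rpow hp, Finset.sum_ite, Finset.sum_const, nsmul_eq_mul,
    mul_zero, add_zero, Nphi]

lemma normTp_normedIndicator (hq : 0 < q) (hp : 0 < p) (w : T.V) :
    T.memTp p (T.normedIndicator p w) ∧ T.normTp p (T.normedIndicator p w) = 1 := by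
  have hsum := T.sum_norm_normedIndicator_rpow hp.ne' (w := w)
  have hle := T.memTp_and_normTp_le_of_sum_le hq hp zero_le_one fun n => by
    rw [hsum]
    split_ifs <;> simp
  refine ⟨hle.1, hle.2.antisymm ?_⟩
  calc (1 : ℝ) = T.Mp p (T.level w) (T.normedIndicator p w) := by
        rw [Mp_eq, hsum, if_pos rfl, div_self (by exact_mod_cast (treeC_pos hq _).ne'),
          Real.one_rpow]
    _ ≤ _ := le_ciSup hle.1 _

lemma opNormTp_rpow_le (hq : 0 < q) (hp : 0 < p) {phi : T.V → T.V} {M : ℕ}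
    (hub : ∀ v, T.level (phi v) ≤ M) {s : ℝ} (hs : ∀ n, (T.Nmax phi M n : ℝ) ≤ s * treeC q n) :
    T.opNormTp p phi ^ p ≤ treeC q (M - 1) + s * (treeC q M - treeC q (M - 1)) := by
  have hne : {x : ℝ | ∃ f : T.V → ℂ, T.memTp p f ∧ T.normTp p f = 1 ∧
      x = T.normTp p (f ∘ phi)}.Nonempty :=
    ⟨_, _, (T.normTp_normedIndicator hq hp T.root).1, (T.normTp_normedIndicator hq hp _).2, rfl⟩
  have hle : T.opNormTp p phi ≤
      (treeC q (M - 1) + s * (treeC q M - treeC q (M - 1))) ^ p⁻¹ := by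
    refine csSup_le hne ?_
    rintro _ ⟨f, hf, hf1, rfl⟩
    simpa [hf1] using (T.normTp_comp_le hq hp hub hs hf).2
  calc T.opNormTp p phi ^ p
      ≤ ((treeC q (M - 1) + s * (treeC q M - treeC q (M - 1))) ^ p⁻¹) ^ p :=
        Real.rpow_le_rpow (Real.sSup_nonneg fun x ⟨f, _, _, hx⟩ => hx ▸ T.normTp_nonneg _) hle
          hp.le
    _ = _ := Real.rpow_inv_rpow (T.treeC_pred_add_mul_sub_nonneg hq hs) hp.ne'

lemma le_opNormTp (hq : 0 < q) (hp : 0 < p) {phi : T.V → T.V} {M : ℕ}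
    (hub : ∀ v, T.level (phi v) ≤ M) {f : T.V → ℂ} (hf : T.memTp p f)
    (hf1 : T.normTp p f = 1) :
    T.normTp p (f ∘ phi) ≤ T.opNormTp p phi := by
  refine le_csSup ⟨(treeC q M : ℝ) ^ p⁻¹, ?_⟩ ⟨f, hf, hf1, rfl⟩
  rintro _ ⟨g, hg, hg1, rfl⟩
  simpa [hg1] using (T.normTp_comp_le hq hp hub (s := 1)
    (fun n => by simpa using T.Nmax_le_treeC phi M n) hg).2

lemma treeC_mul_Nmax_div_le_opNormTp_rpow (hq : 0 < q) (hp : 0 < p) {phi : T.V → T.V}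
    {M : ℕ} (hub : ∀ v, T.level (phi v) ≤ M) (m n : ℕ) :
    treeC q m * T.Nmax phi m n / treeC q n ≤ T.opNormTp p phi ^ p := by
  have hne : (T.levelFinset m).Nonempty :=
    Finset.card_pos.1 (by rw [card_levelFinset]; exact treeC_pos hq m)
  obtain ⟨w, hw, hNw⟩ := Finset.exists_mem_eq_sup _ hne fun w => T.Nphi phi n w
  obtain ⟨hf, hf1⟩ := T.normTp_normedIndicator hq hp w
  have hcomp := (T.boundedCompTp hq hp hub).1 _ hf
  calc (treeC q m * T.Nmax phi m n / treeC q n : ℝ)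
      = T.Mp p n (T.normedIndicator p w ∘ phi) ^ p := by
        rw [Mp_rpow _ hp.ne', Nmax, hNw, ← T.mem_levelFinset.1 hw]
        simp only [Function.comp_apply, T.sum_norm_normedIndicator_comp_rpow hp.ne', mul_comm]
    _ ≤ T.opNormTp p phi ^ p :=
        Real.rpow_le_rpow (T.Mp_nonneg n _)
          ((le_ciSup hcomp n).trans (T.le_opNormTp hq hp hub hf hf1)) hp.le

end HomTree

theorem bounded_symbol_comp_Tp_general (q : ℕ) (hq : 2 ≤ q) (T : HomTree q) (p : ℝ) (hp : 1 ≤ p)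
    (phi : T.V → T.V) (M : ℕ)
    (hub : ∀ v, T.level (phi v) ≤ M) :
    T.BoundedCompTp p phi ∧
    T.opNormTp p phi ^ p ≤ (treeC q M : ℝ) ∧
    (T.opNormTp p phi ^ p = (treeC q M : ℝ) ↔
      (⨆ n : ℕ, (T.Nmax phi M n : ℝ) / (treeC q n : ℝ)) = 1) := by
  have hq0 : 0 < q := by omega
  have hp0 : 0 < p := by linarith
  set s := ⨆ n : ℕ, (T.Nmax phi M n : ℝ) / (treeC q n : ℝ)
  have hc : ∀ n, (0 : ℝ) < treeC q n := fun n => by exact_mod_cast treeC_pos hq0 n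
  have hratio : ∀ n, (T.Nmax phi M n : ℝ) / treeC q n ≤ 1 := fun n =>
    (div_le_one (hc n)).2 (by exact_mod_cast T.Nmax_le_treeC phi M n)
  have hs_le_one : s ≤ 1 := ciSup_le hratio
  have hNs : ∀ n, (T.Nmax phi M n : ℝ) ≤ s * treeC q n := fun n =>
    (div_le_iff₀ (hc n)).1 (le_ciSup ⟨1, Set.forall_mem_range.2 hratio⟩ n)
  have hupper := T.opNormTp_rpow_le hq0 hp0 hub hNs
  have hlower : s * treeC q M ≤ T.opNormTp p phi ^ p := by
    rw [← le_div_iff₀ (hc M)]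
    refine ciSup_le fun n => (le_div_iff₀' (hc M)).2 ?_
    simpa [mul_div_assoc] using T.treeC_mul_Nmax_div_le_opNormTp_rpow hq0 hp0 hub M n
  have hmono : (treeC q (M - 1) : ℝ) ≤ treeC q M := by
    exact_mod_cast treeC_mono hq0 (Nat.sub_le M 1)
  refine ⟨T.boundedCompTp hq0 hp0 hub, by nlinarith, fun h => ?_, fun h => ?_⟩
  · rcases eq_or_ne M 0 with rfl | hM
    · simp [s, T.Nmax_zero (fun v => Nat.le_zero.1 (hub v)), (hc _).ne']
    · have hlt : (treeC q (M - 1) : ℝ) < treeC q M := by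
        exact_mod_cast treeC_strictMono hq (Nat.sub_lt (Nat.pos_of_ne_zero hM) one_pos)
      nlinarith
  · exact le_antisymm (by nlinarith) (by simpa [h] using hlower)

/-- For `q ≥ 2` and a bounded self-map `φ` with `sup_v |φ v| = M`, `C_φ` is bounded on
`T_p` with `‖C_φ‖^p ≤ c_M`, and `‖C_φ‖^p = c_M` iff `sup_n N_{M,n}/c_n = 1`. -/
theorem bounded_symbol_comp_Tp (q : ℕ) (hq : 2 ≤ q) (T : HomTree q) (p : ℝ) (hp : 1 ≤ p)
    (phi : T.V → T.V) (M : ℕ)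
    (hub : ∀ v, T.level (phi v) ≤ M) (hsup : ∃ v, T.level (phi v) = M) :
    T.BoundedCompTp p phi ∧
    T.opNormTp p phi ^ p ≤ (treeC q M : ℝ) ∧
    (T.opNormTp p phi ^ p = (treeC q M : ℝ) ↔
      (⨆ n : ℕ, (T.Nmax phi M n : ℝ) / (treeC q n : ℝ)) = 1) :=
  bounded_symbol_comp_Tp_general q hq T p hp phi M hub
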